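/- Let G be a simple graph on vertex set Fin n and let h > 0 be a real number such that for every nonempty subset S ⊆ Fin n with |S| ≤ n/2 one has |∂S| ≥ h·|S|. Let p : (Fin n → Bool) → ℝ be a probability distribution (nonnegative values summing to 1) that is symmetric under bitwise negation, i.e. p(x) = p(x̄) for all x. If the expected cut satisfies Σ_x p(x)·cut_G(x) ≤ (h/6)·n, then p({x : |x| ≤ n/3}) ≥ 1/4. -/

import Mathlib

/-! The support `{x = 1}` of a configuration in the middle band `n/3 < |x| < 2n/3`, or its
complement, is a set of size between `n/3` and `n/2`, so its cut is at least `h n / 3` by the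
Cheeger bound. By Markov's inequality the band therefore has probability at most `1/2`.
Everything else has `|x| ≤ n/3` or `|x̄| ≤ n/3`, and these two events have the same probability
by the negation symmetry of `p`, so each has probability at least `1/4`. -/

/-- The number of edges of `G` whose endpoints receive different values under the
Boolean assignment `x` (the "cut" of `x`). -/
def SimpleGraph.cutCard {n : ℕ} (G : SimpleGraph (Fin n)) [DecidableRel G.Adj]
    (x : Fin n → Bool) : ℕ :=
  (G.edgeFinset.filter (fun e => ¬ (Sym2.map x e).IsDiag)).card

/-- The edge boundary of a set `S` of vertices: edges with exactly one endpoint in `S`. -/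
def SimpleGraph.bdryCard {n : ℕ} (G : SimpleGraph (Fin n)) [DecidableRel G.Adj]
    (S : Finset (Fin n)) : ℕ :=
  G.cutCard (fun v => decide (v ∈ S))

/-- The Hamming weight of a Boolean string. -/
def hammingWt {n : ℕ} (x : Fin n → Bool) : ℕ :=
  (Finset.univ.filter (fun j => x j = true)).card

open Finset

namespace Finset

theorem sum_le_sum_filter_add_sum_filter_add_sum_filter_not_and_not {α : Type*} [Fintype α]
    (p : α → ℝ) (hp : ∀ x, 0 ≤ p x) (P Q : α → Prop) [DecidablePred P] [DecidablePred Q] :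
    ∑ x, p x ≤ ∑ x ∈ univ.filter P, p x + ∑ x ∈ univ.filter Q, p x +
      ∑ x ∈ univ.filter (fun x => ¬ P x ∧ ¬ Q x), p x := by
  simp only [sum_filter, ← sum_add_distrib]
  refine sum_le_sum fun x _ => ?_
  split_ifs <;> first | tauto | linarith [hp x]

theorem mul_sum_le_sum_mul_of_le {α : Type*} [Fintype α] (p f : α → ℝ) (hp : ∀ x, 0 ≤ p x)
    (hf : ∀ x, 0 ≤ f x) (s : Finset α) (c : ℝ) (hc : ∀ x ∈ s, c ≤ f x) :
    c * ∑ x ∈ s, p x ≤ ∑ x, p x * f x :=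
  calc c * ∑ x ∈ s, p x = ∑ x ∈ s, p x * c := by rw [mul_sum]; simp only [mul_comm]
    _ ≤ ∑ x ∈ s, p x * f x := sum_le_sum fun x hx => mul_le_mul_of_nonneg_left (hc x hx) (hp x)
    _ ≤ ∑ x, p x * f x :=
      sum_le_sum_of_subset_of_nonneg (subset_univ s) fun x _ _ => mul_nonneg (hp x) (hf x)

theorem sum_filter_comp_perm {α β : Type*} [Fintype α] [AddCommMonoid β] (σ : Equiv.Perm α)
    (p : α → β) (hp : ∀ x, p (σ x) = p x) (P : α → Prop) [DecidablePred P] :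
    ∑ x ∈ univ.filter (fun x => P (σ x)), p x = ∑ x ∈ univ.filter P, p x := by
  simp only [sum_filter]
  exact Fintype.sum_equiv σ _ _ fun x => by rw [hp]

end Finset

def bitNot (n : ℕ) : Equiv.Perm (Fin n → Bool) :=
  Equiv.piCongrRight fun _ => Equiv.boolNot

@[simp]
theorem bitNot_apply {n : ℕ} (x : Fin n → Bool) : bitNot n x = fun j => ! x j := rfl

theorem hammingWt_le {n : ℕ} (x : Fin n → Bool) : hammingWt x ≤ n := by
  simpa [hammingWt] using card_filter_le univ (fun j => x j = true)

theorem hammingWt_not_add {n : ℕ} (x : Fin n → Bool) :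
    hammingWt (fun j => ! x j) + hammingWt x = n := by
  simp only [hammingWt, Bool.not_eq_true', ← Bool.not_eq_true]
  rw [add_comm, card_filter_add_card_filter_not, card_univ, Fintype.card_fin]

namespace SimpleGraph

variable {n : ℕ} (G : SimpleGraph (Fin n)) [DecidableRel G.Adj]

theorem cutCard_not (x : Fin n → Bool) : G.cutCard (fun j => ! x j) = G.cutCard x := by
  unfold cutCard
  congr 1
  refine filter_congr fun e _ => ?_
  induction e using Sym2.ind with
  | _ a b => simp

theorem bdryCard_support (x : Fin n → Bool) :
    G.bdryCard (univ.filter (fun j => x j = true)) = G.cutCard x := by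
  simp [bdryCard]

def HasEdgeExpansion (h : ℝ) : Prop :=
  ∀ S : Finset (Fin n), S.Nonempty → (S.card : ℝ) ≤ n / 2 → h * S.card ≤ (G.bdryCard S : ℝ)

variable {G} {h : ℝ}

theorem mul_hammingWt_le_cutCard
    (hCheeger : G.HasEdgeExpansion h) {x : Fin n → Bool} (hx : (hammingWt x : ℝ) ≤ n / 2) :
    h * hammingWt x ≤ G.cutCard x := by
  rcases (univ.filter (fun j => x j = true)).eq_empty_or_nonempty with hS | hS
  · simp [hammingWt, hS]
  · have := hCheeger _ hS hx
    rwa [bdryCard_support] at this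

theorem mul_le_cutCard_of_le_hammingWt
    (hCheeger : G.HasEdgeExpansion h) (hh : 0 ≤ h) {x : Fin n → Bool} {c : ℝ}
    (hc : c ≤ hammingWt x) (hc' : c ≤ hammingWt (fun j => ! x j)) : h * c ≤ G.cutCard x := by
  have hsum : (hammingWt (fun j => ! x j) : ℝ) + hammingWt x = n := by
    exact_mod_cast hammingWt_not_add x
  rcases le_or_gt (hammingWt x : ℝ) (n / 2) with hx | hx
  · exact (mul_le_mul_of_nonneg_left hc hh).trans (mul_hammingWt_le_cutCard hCheeger hx)
  · rw [← cutCard_not]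
    exact (mul_le_mul_of_nonneg_left hc' hh).trans
      (mul_hammingWt_le_cutCard hCheeger (by linarith))

end SimpleGraph

theorem stmt1 (n : ℕ) (G : SimpleGraph (Fin n)) [DecidableRel G.Adj] (h : ℝ)
    (hh : 0 < h)
    (hCheeger : ∀ S : Finset (Fin n), S.Nonempty → (S.card : ℝ) ≤ n / 2 →
      h * S.card ≤ (G.bdryCard S : ℝ))
    (p : (Fin n → Bool) → ℝ)
    (hp0 : ∀ x, 0 ≤ p x) (hp1 : ∑ x, p x = 1)
    (hsym : ∀ x, p x = p (fun j => ! x j))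
    (hlow : ∑ x, p x * (G.cutCard x : ℝ) ≤ (h / 6) * n) :
    (1 : ℝ) / 4 ≤ ∑ x ∈ Finset.univ.filter (fun x => (hammingWt x : ℝ) ≤ n / 3), p x := by
  set Low : (Fin n → Bool) → Prop := fun x => (hammingWt x : ℝ) ≤ n / 3
  set High : (Fin n → Bool) → Prop := fun x => Low (bitNot n x)
  set Band := univ.filter fun x => ¬ Low x ∧ ¬ High x
  have hcover := sum_le_sum_filter_add_sum_filter_add_sum_filter_not_and_not p hp0 Low High
  have hHigh : ∑ x ∈ univ.filter High, p x = ∑ x ∈ univ.filter Low, p x :=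
    sum_filter_comp_perm (bitNot n) p (fun x => (hsym x).symm) Low
  have hmarkov : h * (n / 3) * ∑ x ∈ Band, p x ≤ h / 6 * n := by
    refine (mul_sum_le_sum_mul_of_le p _ hp0 (fun x => Nat.cast_nonneg _) Band _
      fun x hx => ?_).trans hlow
    simp only [Band, Low, High, mem_filter, not_le, bitNot_apply] at hx
    exact G.mul_le_cutCard_of_le_hammingWt hCheeger hh.le hx.2.1.le hx.2.2.le
  have hBand : ∑ x ∈ Band, p x ≤ 1 / 2 := by
    rcases Band.eq_empty_or_nonempty with hempty | ⟨x, hx⟩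
    · simp [hempty]
    · simp only [Band, Low, mem_filter, not_le] at hx
      have hn : (0 : ℝ) < n := by
        have : (hammingWt x : ℝ) ≤ n := by exact_mod_cast hammingWt_le x
        linarith [hx.2.1]
      exact le_of_mul_le_mul_left (hmarkov.trans_eq (by ring)) (by positivity)
  linarith
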